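/- arXiv:2002.12236 — 4 statements merged into one kernel-verified Lean document; each statement's English description precedes it below -/
import Mathlib

section
/- Let h : ℝ^m → ℝ be twice continuously differentiable with l·I ⪯ ∇²h(y) ⪯ L·I for all y, where 0 < l ≤ L. Let A : ℝ^{m×n}, b ∈ ℝ^m, and consider gradient descent x^{k+1} = x^k - (1/t)·Aᵀ∇h(Ax^k + b) with step size 1/t where t = (L·σ_max(A)² + l·σ_{min>0}(A)²)/2, where σ_{min>0}(A) denotes the smallest nonzero singular value of A. If x* is a minimizer of x ↦ h(Ax+b) with x^k - x* ∈ (ker A)^⊥ for all k, then ‖x^{k+1} - x*‖ ≤ ((φ-1)/(φ+1))·‖x^k - x*‖, where φ = (σ_max(A)/σ_{min>0}(A))² · (L/l). -/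
/-!
One gradient step maps `x` to `x - t⁻¹ ∇g(x)` with `g = h(A · + b)`. Since `∇g(x⋆) = 0`, the mean
value theorem writes `⟪x⁺ - x⋆, w⟫` as `B(x - x⋆, w)` for the symmetric form
`B = ⟪·,·⟫ - t⁻¹ ∇²g(y)` at some point `y`. On `(ker A)ᗮ` we have
`l σ_{min>0}² ≤ ∇²g ≤ L σ_max²`, and the choice of `t` centres this interval so that
`|B(z, z)| ≤ r ‖z‖²` with `r = (φ - 1)/(φ + 1)`. Polarization then gives
`‖x⁺ - x⋆‖² = B(x - x⋆, x⁺ - x⋆) ≤ r ‖x - x⋆‖ ‖x⁺ - x⋆‖`.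
-/

open Matrix

/-- Largest singular value of a real matrix. -/
noncomputable def sigmaMax {m n : ℕ} (A : Matrix (Fin m) (Fin n) ℝ) : ℝ :=
  Real.sqrt (sSup (Set.range (Matrix.isHermitian_conjTranspose_mul_self A).eigenvalues))

/-- Smallest nonzero singular value of a real matrix. -/
noncomputable def sigmaMinPos {m n : ℕ} (A : Matrix (Fin m) (Fin n) ℝ) : ℝ :=
  Real.sqrt (sInf {x : ℝ | 0 < x ∧
    x ∈ Set.range (Matrix.isHermitian_conjTranspose_mul_self A).eigenvalues})

open RealInnerProductSpace

namespace Matrix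

variable {m n : ℕ} (A : Matrix (Fin m) (Fin n) ℝ)

theorem toEuclideanLin_transpose_eq_adjoint :
    toEuclideanLin Aᵀ = LinearMap.adjoint (toEuclideanLin A) := by
  rw [← toEuclideanLin_conjTranspose_eq_adjoint, conjTranspose_eq_transpose_of_trivial]

theorem norm_toEuclideanLin_sq_eq_sum_eigenvalues (v : EuclideanSpace ℝ (Fin n)) :
    ‖toEuclideanLin A v‖ ^ 2 = ∑ j, (isHermitian_conjTranspose_mul_self A).eigenvalues j *
      ⟪(isHermitian_conjTranspose_mul_self A).eigenvectorBasis j, v⟫ ^ 2 := by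
  set hA := isHermitian_conjTranspose_mul_self A
  set e := hA.eigenvectorBasis
  have heig (j) : toEuclideanLin Aᵀ (toEuclideanLin A (e j)) = hA.eigenvalues j • e j := by
    ext i
    simpa [mulVec_mulVec, e, hA] using congrFun (hA.mulVec_eigenvectorBasis j) i
  rw [← real_inner_self_eq_norm_sq, ← LinearMap.adjoint_inner_right,
    ← toEuclideanLin_transpose_eq_adjoint]
  nth_rw 2 [← e.sum_repr' v]
  simp only [inner_sum, map_sum, map_smul, heig, smul_smul, real_inner_smul_right,
    real_inner_comm v]
  exact Finset.sum_congr rfl fun j _ => by ring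

theorem toEuclideanLin_eigenvectorBasis_mem_ker {j : Fin n}
    (hj : (isHermitian_conjTranspose_mul_self A).eigenvalues j = 0) :
    (isHermitian_conjTranspose_mul_self A).eigenvectorBasis j ∈
      LinearMap.ker (toEuclideanLin A) := by
  have := norm_toEuclideanLin_sq_eq_sum_eigenvalues A
    ((isHermitian_conjTranspose_mul_self A).eigenvectorBasis j)
  simp only [OrthonormalBasis.inner_eq_ite, ite_pow, one_pow, zero_pow two_ne_zero, mul_ite,
    mul_one, mul_zero, Finset.sum_ite_eq', Finset.mem_univ, if_true, hj] at this
  exact LinearMap.mem_ker.mpr (norm_eq_zero.mp (pow_eq_zero_iff two_ne_zero |>.mp this))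

end Matrix

section SingularValues

variable {m n : ℕ} (A : Matrix (Fin m) (Fin n) ℝ)

theorem finite_setOf_pos_mem_range_eigenvalues : {x : ℝ | 0 < x ∧
    x ∈ Set.range (isHermitian_conjTranspose_mul_self A).eigenvalues}.Finite :=
  (Set.finite_range _).subset fun _ hx => hx.2

theorem sq_sigmaMax :
    sigmaMax A ^ 2 = sSup (Set.range (isHermitian_conjTranspose_mul_self A).eigenvalues) :=
  Real.sq_sqrt <| Real.sSup_nonneg <| by
    rintro _ ⟨j, rfl⟩
    exact eigenvalues_conjTranspose_mul_self_nonneg A j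

theorem sq_sigmaMinPos : sigmaMinPos A ^ 2 = sInf {x : ℝ | 0 < x ∧
    x ∈ Set.range (isHermitian_conjTranspose_mul_self A).eigenvalues} :=
  Real.sq_sqrt <| Real.sInf_nonneg fun _ hx => hx.1.le

theorem norm_toEuclideanLin_sq_le (v : EuclideanSpace ℝ (Fin n)) :
    ‖toEuclideanLin A v‖ ^ 2 ≤ sigmaMax A ^ 2 * ‖v‖ ^ 2 := by
  rw [norm_toEuclideanLin_sq_eq_sum_eigenvalues, sq_sigmaMax,
    ← (isHermitian_conjTranspose_mul_self A).eigenvectorBasis.sum_sq_inner_right v,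
    Finset.mul_sum]
  gcongr with j
  exact le_csSup (Set.finite_range _).bddAbove ⟨j, rfl⟩

theorem sigmaMinPos_sq_mul_le {v : EuclideanSpace ℝ (Fin n)}
    (hv : v ∈ (LinearMap.ker (toEuclideanLin A))ᗮ) :
    sigmaMinPos A ^ 2 * ‖v‖ ^ 2 ≤ ‖toEuclideanLin A v‖ ^ 2 := by
  rw [norm_toEuclideanLin_sq_eq_sum_eigenvalues, sq_sigmaMinPos,
    ← (isHermitian_conjTranspose_mul_self A).eigenvectorBasis.sum_sq_inner_right v,
    Finset.mul_sum]
  refine Finset.sum_le_sum fun j _ => ?_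
  rcases (eigenvalues_conjTranspose_mul_self_nonneg A j).eq_or_lt with hj | hj
  · rw [(Submodule.mem_orthogonal _ v).mp hv _
      (toEuclideanLin_eigenvectorBasis_mem_ker A hj.symm)]
    simp
  · gcongr
    exact csInf_le (finite_setOf_pos_mem_range_eigenvalues A).bddBelow ⟨hj, j, rfl⟩

theorem sigmaMinPos_pos (hA : A ≠ 0) : 0 < sigmaMinPos A := by
  obtain ⟨j, hj⟩ : ∃ j, (isHermitian_conjTranspose_mul_self A).eigenvalues j ≠ 0 := by
    by_contra! h
    exact hA <| conjTranspose_mul_self_eq_zero.mp <|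
      (isHermitian_conjTranspose_mul_self A).eigenvalues_eq_zero_iff.mp (funext h)
  have hne : {x : ℝ | 0 < x ∧
      x ∈ Set.range (isHermitian_conjTranspose_mul_self A).eigenvalues}.Nonempty :=
    ⟨_, (eigenvalues_conjTranspose_mul_self_nonneg A j).lt_of_ne' hj, j, rfl⟩
  exact Real.sqrt_pos.mpr (hne.csInf_mem (finite_setOf_pos_mem_range_eigenvalues A)).1

theorem sigmaMinPos_le_sigmaMax : sigmaMinPos A ≤ sigmaMax A := by
  refine Real.sqrt_le_sqrt ?_
  rcases Set.eq_empty_or_nonempty {x : ℝ | 0 < x ∧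
      x ∈ Set.range (isHermitian_conjTranspose_mul_self A).eigenvalues} with h | ⟨x, hx⟩
  · rw [h, Real.sInf_empty, ← sq_sigmaMax]
    positivity
  · exact (csInf_le (finite_setOf_pos_mem_range_eigenvalues A).bddBelow hx).trans
      (le_csSup (Set.finite_range _).bddAbove hx.2)

end SingularValues

theorem abs_sub_two_div_mul_le {μ M a H : ℝ} (hμM : 0 < M + μ) (hlow : μ * a ≤ H)
    (hup : H ≤ M * a) : |a - 2 / (M + μ) * H| ≤ (M - μ) / (M + μ) * a := by
  have hdiv : a - 2 / (M + μ) * H = ((M + μ) * a - 2 * H) / (M + μ) := by field_simp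
  rw [hdiv, div_mul_eq_mul_div, abs_div, abs_of_pos hμM, div_le_div_iff_of_pos_right hμM, abs_le]
  constructor <;> linarith

section InnerProductSpace

variable {V : Type*} [NormedAddCommGroup V] [InnerProductSpace ℝ V]

theorem two_mul_le_of_abs_apply_self_le {B : LinearMap.BilinForm ℝ V}
    (hB : ∀ v w, B v w = B w v) {S : Submodule ℝ V} {r : ℝ}
    (hS : ∀ z ∈ S, |B z z| ≤ r * ‖z‖ ^ 2) {v w : V} (hv : v ∈ S) (hw : w ∈ S) :
    2 * B v w ≤ r * (‖v‖ ^ 2 + ‖w‖ ^ 2) := by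
  have hadd := (abs_le.mp (hS _ (S.add_mem hv hw))).2
  have hsub := (abs_le.mp (hS _ (S.sub_mem hv hw))).1
  have hpar := parallelogram_law_with_norm ℝ v w
  simp only [map_add, map_sub, LinearMap.add_apply, LinearMap.sub_apply, hB w v] at hadd hsub
  linear_combination (hadd + hsub + r * hpar) / 2

theorem apply_le_mul_norm_mul_norm_of_abs_apply_self_le {B : LinearMap.BilinForm ℝ V}
    (hB : ∀ v w, B v w = B w v) {S : Submodule ℝ V} {r : ℝ}
    (hS : ∀ z ∈ S, |B z z| ≤ r * ‖z‖ ^ 2) {v w : V} (hv : v ∈ S) (hw : w ∈ S) :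
    B v w ≤ r * ‖v‖ * ‖w‖ := by
  rcases eq_or_ne v 0 with rfl | hv0
  · simp
  rcases eq_or_ne w 0 with rfl | hw0
  · simp
  have hpos : 0 < ‖v‖ * ‖w‖ := by positivity
  -- apply the averaged bound to `‖w‖ • v` and `‖v‖ • w`, which have equal norms
  have := two_mul_le_of_abs_apply_self_le hB hS (S.smul_mem ‖w‖ hv) (S.smul_mem ‖v‖ hw)
  simp only [map_smul, LinearMap.smul_apply, smul_eq_mul, norm_smul, norm_norm] at this
  nlinarith

theorem inner_sub_mul_fderiv_sub_le {g : V → ℝ} (hg : ContDiff ℝ 2 g) {S : Submodule ℝ V}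
    {c r : ℝ} (hS : ∀ y, ∀ z ∈ S, |‖z‖ ^ 2 - c * iteratedFDeriv ℝ 2 g y ![z, z]| ≤ r * ‖z‖ ^ 2)
    {x xs w : V} (hx : x - xs ∈ S) (hw : w ∈ S) :
    ⟪x - xs, w⟫ - c * (fderiv ℝ g x w - fderiv ℝ g xs w) ≤ r * ‖x - xs‖ * ‖w‖ := by
  have hg' : Differentiable ℝ (fderiv ℝ g) :=
    (hg.fderiv_right (m := 1) le_rfl).differentiable one_ne_zero
  obtain ⟨y, -, hy⟩ := domain_mvt (f := fun z => fderiv ℝ g z w)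
    (f' := fun z => (ContinuousLinearMap.apply ℝ ℝ w).comp (fderiv ℝ (fderiv ℝ g) z))
    (fun z _ => ((ContinuousLinearMap.apply ℝ ℝ w).hasFDerivAt.comp z
      (hg' z).hasFDerivAt).hasFDerivWithinAt) convex_univ (Set.mem_univ xs) (Set.mem_univ x)
  let B : LinearMap.BilinForm ℝ V :=
    innerₗ V - c • (fderiv ℝ (fderiv ℝ g) y).toLinearMap₁₂
  have hsymm : IsSymmSndFDerivAt ℝ g y := hg.contDiffAt.isSymmSndFDerivAt (by simp)
  have hB (v v' : V) : B v v' = B v' v := by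
    simp [B, real_inner_comm v, hsymm v v']
  have hBS : ∀ z ∈ S, |B z z| ≤ r * ‖z‖ ^ 2 := by
    simpa [B, iteratedFDeriv_two_apply, real_inner_self_eq_norm_sq] using hS y
  rw [hy]
  simpa only [B, LinearMap.sub_apply, LinearMap.smul_apply, innerₗ_apply_apply, smul_eq_mul,
    ContinuousLinearMap.toLinearMap₁₂_apply_apply_apply, ContinuousLinearMap.comp_apply,
    ContinuousLinearMap.apply_apply] using
    apply_le_mul_norm_mul_norm_of_abs_apply_self_le hB hBS hx hw

theorem norm_sub_smul_gradient_sub_le [CompleteSpace V] {g : V → ℝ} (hg : ContDiff ℝ 2 g)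
    {S : Submodule ℝ V} {c r : ℝ} (hr : 0 ≤ r)
    (hS : ∀ y, ∀ z ∈ S, |‖z‖ ^ 2 - c * iteratedFDeriv ℝ 2 g y ![z, z]| ≤ r * ‖z‖ ^ 2)
    {x xs : V} (hxs : fderiv ℝ g xs = 0) (hx : x - xs ∈ S) (hx' : x - c • gradient g x - xs ∈ S) :
    ‖x - c • gradient g x - xs‖ ≤ r * ‖x - xs‖ := by
  set u := x - c • gradient g x - xs
  have hu : ‖u‖ ^ 2 = ⟪x - xs, u⟫ - c * (fderiv ℝ g x u - fderiv ℝ g xs u) := by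
    have hgrad : ⟪gradient g x, u⟫ = fderiv ℝ g x u := InnerProductSpace.toDual_symm_apply
    rw [← real_inner_self_eq_norm_sq, hxs, _root_.zero_apply, sub_zero, ← hgrad]
    nth_rw 1 [show u = (x - xs) - c • gradient g x from sub_right_comm _ _ _]
    rw [inner_sub_left, real_inner_smul_left]
  have huv : ‖u‖ * ‖u‖ ≤ r * ‖x - xs‖ * ‖u‖ := by
    rw [← sq, hu]
    exact inner_sub_mul_fderiv_sub_le hg hS hx hx'
  rcases (norm_nonneg u).eq_or_lt with hu0 | hu0
  · rw [← hu0]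
    positivity
  · exact le_of_mul_le_mul_right huv hu0

section Composition

variable {W : Type*} [NormedAddCommGroup W] [InnerProductSpace ℝ W] [FiniteDimensional ℝ V]

theorem gradient_comp_linearMap_add [FiniteDimensional ℝ W] {h : W → ℝ} (T : V →ₗ[ℝ] W) (b : W)
    {x : V} (hh : DifferentiableAt ℝ h (T x + b)) :
    gradient (fun y => h (T y + b)) x = LinearMap.adjoint T (gradient h (T x + b)) := by
  have hd : HasFDerivAt (fun y => h (T y + b))
      ((fderiv ℝ h (T x + b)).comp T.toContinuousLinearMap) x :=
    hh.hasFDerivAt.comp x (T.toContinuousLinearMap.hasFDerivAt.add_const b)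
  refine HasGradientAt.gradient (hd.congr_fderiv ?_)
  ext w
  simp [LinearMap.adjoint_inner_left, InnerProductSpace.toDual_symm_apply, gradient]

theorem iteratedFDeriv_comp_linearMap_add {h : W → ℝ} {k : ℕ} (hh : ContDiff ℝ k h)
    (T : V →ₗ[ℝ] W) (b : W) (x : V) (v : Fin k → V) :
    iteratedFDeriv ℝ k (fun y => h (T y + b)) x v = iteratedFDeriv ℝ k h (T x + b) (T ∘ v) := by
  have hcomp : (fun y => h (T y + b)) = (fun w => h (w + b)) ∘ T.toContinuousLinearMap := rfl
  rw [hcomp, T.toContinuousLinearMap.iteratedFDeriv_comp_right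
    (f := fun w => h (w + b)) (hh.comp (contDiff_id.add contDiff_const)) x le_rfl]
  simp [iteratedFDeriv_comp_add_right, Function.comp_def]

theorem hessian_comp_linearMap_add_bounds {h : W → ℝ} (hh : ContDiff ℝ 2 h) {l L : ℝ}
    (hl : 0 ≤ l) (hL : 0 ≤ L)
    (hHess : ∀ y v : W, l * ‖v‖ ^ 2 ≤ iteratedFDeriv ℝ 2 h y ![v, v] ∧
      iteratedFDeriv ℝ 2 h y ![v, v] ≤ L * ‖v‖ ^ 2)
    {T : V →ₗ[ℝ] W} {S : Submodule ℝ V} {α β : ℝ} (hα : ∀ z ∈ S, α * ‖z‖ ^ 2 ≤ ‖T z‖ ^ 2)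
    (hβ : ∀ z, ‖T z‖ ^ 2 ≤ β * ‖z‖ ^ 2) (b : W) (y : V) {z : V} (hz : z ∈ S) :
    l * α * ‖z‖ ^ 2 ≤ iteratedFDeriv ℝ 2 (fun y => h (T y + b)) y ![z, z] ∧
      iteratedFDeriv ℝ 2 (fun y => h (T y + b)) y ![z, z] ≤ L * β * ‖z‖ ^ 2 := by
  have hTz : T ∘ ![z, z] = ![T z, T z] := by
    ext i
    fin_cases i <;> rfl
  rw [iteratedFDeriv_comp_linearMap_add hh, hTz]
  obtain ⟨hlow, hup⟩ := hHess (T y + b) (T z)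
  constructor
  · calc l * α * ‖z‖ ^ 2 = l * (α * ‖z‖ ^ 2) := mul_assoc _ _ _
      _ ≤ l * ‖T z‖ ^ 2 := mul_le_mul_of_nonneg_left (hα z hz) hl
      _ ≤ _ := hlow
  · calc _ ≤ L * ‖T z‖ ^ 2 := hup
      _ ≤ L * (β * ‖z‖ ^ 2) := mul_le_mul_of_nonneg_left (hβ z) hL
      _ = L * β * ‖z‖ ^ 2 := (mul_assoc _ _ _).symm

end Composition

end InnerProductSpace

theorem gradient_descent_linear_rate {m n : ℕ}
    (h : EuclideanSpace ℝ (Fin m) → ℝ) (hC2 : ContDiff ℝ 2 h)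
    (l L : ℝ) (hl : 0 < l) (hlL : l ≤ L)
    (hHess : ∀ y v : EuclideanSpace ℝ (Fin m),
      l * ‖v‖ ^ 2 ≤ iteratedFDeriv ℝ 2 h y ![v, v] ∧
      iteratedFDeriv ℝ 2 h y ![v, v] ≤ L * ‖v‖ ^ 2)
    (A : Matrix (Fin m) (Fin n) ℝ) (b : EuclideanSpace ℝ (Fin m))
    (t : ℝ) (ht : t = (L * sigmaMax A ^ 2 + l * sigmaMinPos A ^ 2) / 2)
    (x : ℕ → EuclideanSpace ℝ (Fin n))
    (hiter : ∀ k, x (k + 1) =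
      x k - (1 / t) • Matrix.toEuclideanLin Aᵀ
        (gradient h (Matrix.toEuclideanLin A (x k) + b)))
    (xs : EuclideanSpace ℝ (Fin n))
    (hmin : ∀ y, h (Matrix.toEuclideanLin A xs + b) ≤ h (Matrix.toEuclideanLin A y + b))
    (hker : ∀ k, x k - xs ∈ (LinearMap.ker (Matrix.toEuclideanLin A))ᗮ)
    (φ : ℝ) (hφ : φ = (sigmaMax A / sigmaMinPos A) ^ 2 * (L / l)) :
    ∀ k, ‖x (k + 1) - xs‖ ≤ (φ - 1) / (φ + 1) * ‖x k - xs‖ := by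
  intro k
  rcases eq_or_ne A 0 with rfl | hA
  · have hx (j : ℕ) : x j - xs = 0 := by simpa using hker j
    simp [hx]
  set μ := l * sigmaMinPos A ^ 2
  set M := L * sigmaMax A ^ 2
  have hμ : 0 < μ := by have := sigmaMinPos_pos A hA; positivity
  have hμM : μ ≤ M := mul_le_mul hlL (pow_le_pow_left₀ (sigmaMinPos_pos A hA).le
    (sigmaMinPos_le_sigmaMax A) 2) (by positivity) (hl.le.trans hlL)
  set g := fun y => h (toEuclideanLin A y + b)
  have hg : ContDiff ℝ 2 g :=
    hC2.comp ((toEuclideanLin A).toContinuousLinearMap.contDiff.add contDiff_const)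
  have hstep : x (k + 1) = x k - (1 / t) • gradient g (x k) := by
    rw [hiter, gradient_comp_linearMap_add _ _ (hC2.differentiable two_ne_zero _),
      toEuclideanLin_transpose_eq_adjoint]
  have hS (y) : ∀ z ∈ (LinearMap.ker (toEuclideanLin A))ᗮ,
      |‖z‖ ^ 2 - 1 / t * iteratedFDeriv ℝ 2 g y ![z, z]| ≤ (M - μ) / (M + μ) * ‖z‖ ^ 2 := by
    intro z hz
    obtain ⟨hlow, hup⟩ := hessian_comp_linearMap_add_bounds hC2 hl.le (hl.le.trans hlL) hHess
      (fun _ => sigmaMinPos_sq_mul_le A) (norm_toEuclideanLin_sq_le A) b y hz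
    rw [ht, one_div_div]
    exact abs_sub_two_div_mul_le (by linarith) hlow hup
  have hcrit : fderiv ℝ g xs = 0 := IsLocalMin.fderiv_eq_zero (Filter.Eventually.of_forall hmin)
  have hrate : (φ - 1) / (φ + 1) = (M - μ) / (M + μ) := by
    have hφ' : φ = M / μ := by
      rw [hφ, div_pow, div_mul_div_comm, mul_comm (sigmaMax A ^ 2), mul_comm (sigmaMinPos A ^ 2)]
    rw [hφ', div_sub_one hμ.ne', div_add_one hμ.ne', div_div_div_cancel_right₀ hμ.ne']
  rw [hrate, hstep]
  exact norm_sub_smul_gradient_sub_le hg (div_nonneg (by linarith) (by linarith)) hS hcrit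
    (hker k) (hstep ▸ hker (k + 1))
end

section
/- Let K_l ∈ ℝ^{|E_l|×|V|} have full row rank, T_l = K_l K_lᵀ, and let P_{A,l} and P_{I,l} = I_l - P_{A,l} be complementary coordinate projections on ℝ^{E_l}. Then the matrix Π_{I,l} := K_lᵀ T_l^{-1/2} (I_l - (T_l^{-1/2}P_{A,l})(T_l^{-1/2}P_{A,l})†) T_l^{-1/2} K_l is an orthogonal projection (symmetric and idempotent) on ℝ^{|V|}. -/
/-! With `W = S⁻¹ K` one has `W Wᵀ = S⁻¹ T S⁻¹ = 1`, and `Π = Wᵀ (1 - A A†) W` where `A A†` is an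
orthogonal projection for any pseudoinverse; conjugation by a matrix with orthonormal rows
preserves orthogonal projections. -/

open Matrix

/-- `X` is the Moore–Penrose pseudoinverse of `A`. -/
def IsMoorePenrose {a b : Type*} [Fintype a] [Fintype b]
    (A : Matrix a b ℝ) (X : Matrix b a ℝ) : Prop :=
  A * X * A = A ∧ X * A * X = X ∧ (A * X)ᵀ = A * X ∧ (X * A)ᵀ = X * A

namespace Matrix

variable {m n R : Type*} [Fintype m] [Fintype n] [CommRing R]

def IsOrthProj (P : Matrix n n R) : Prop :=
  Pᵀ = P ∧ P * P = P

theorem IsOrthProj.one_sub [DecidableEq n] {P : Matrix n n R} (hP : P.IsOrthProj) :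
    (1 - P).IsOrthProj := by
  refine ⟨by rw [transpose_sub, transpose_one, hP.1], ?_⟩
  rw [sub_mul, mul_sub, mul_sub, hP.2, one_mul, mul_one, one_mul, sub_self, sub_zero]

theorem IsOrthProj.transpose_mul_mul [DecidableEq m] {P : Matrix m m R} (hP : P.IsOrthProj)
    {W : Matrix m n R} (hW : W * Wᵀ = 1) : (Wᵀ * P * W).IsOrthProj := by
  refine ⟨by rw [transpose_mul, transpose_mul, transpose_transpose, hP.1, Matrix.mul_assoc], ?_⟩
  calc Wᵀ * P * W * (Wᵀ * P * W) = Wᵀ * P * (W * Wᵀ) * P * W := by simp only [Matrix.mul_assoc]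
    _ = Wᵀ * P * W := by rw [hW, Matrix.mul_one, Matrix.mul_assoc Wᵀ P P, hP.2]

theorem inv_mul_mul_transpose_eq_one [DecidableEq m] {S : Matrix m m R} (hS : S.IsSymm)
    (hdet : IsUnit S.det) {K : Matrix m n R} (hK : S * S = K * Kᵀ) :
    S⁻¹ * K * (S⁻¹ * K)ᵀ = 1 := by
  rw [transpose_mul, transpose_nonsing_inv, hS.eq, Matrix.mul_assoc, ← Matrix.mul_assoc K,
    ← hK, ← Matrix.mul_assoc, nonsing_inv_mul_cancel_left _ _ hdet, mul_nonsing_inv _ hdet]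

end Matrix

theorem IsMoorePenrose.isOrthProj_mul {a b : Type*} [Fintype a] [Fintype b]
    {A : Matrix a b ℝ} {X : Matrix b a ℝ} (h : IsMoorePenrose A X) : (A * X).IsOrthProj :=
  ⟨h.2.2.1, by rw [← Matrix.mul_assoc, h.1]⟩

theorem blockwise_matrix_is_orthogonal_projection_general
    {El V : Type*} [Fintype El] [DecidableEq El] [Fintype V]
    (Kl : Matrix El V ℝ)
    (Tl : Matrix El El ℝ) (hTl : Tl = Kl * Klᵀ)
    (PAl : Matrix El El ℝ)
    -- `S⁻¹` plays the role of `T_l^{-1/2}`: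
    (S : Matrix El El ℝ) (hS : S.PosDef) (hSsq : S * S = Tl)
    (D : Matrix El El ℝ) (hD : IsMoorePenrose (S⁻¹ * PAl) D)
    (Pr : Matrix V V ℝ)
    (hPr : Pr = Klᵀ * S⁻¹ * ((1 : Matrix El El ℝ) - (S⁻¹ * PAl) * D) * S⁻¹ * Kl) :
    Prᵀ = Pr ∧ Pr * Pr = Pr := by
  have hSsymm : S.IsSymm := isHermitian_iff_isSymm.mp hS.isHermitian
  have hW : S⁻¹ * Kl * (S⁻¹ * Kl)ᵀ = 1 :=
    inv_mul_mul_transpose_eq_one hSsymm ((isUnit_iff_isUnit_det S).mp hS.isUnit) (hSsq.trans hTl)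
  have hPr' : Pr = (S⁻¹ * Kl)ᵀ * (1 - S⁻¹ * PAl * D) * (S⁻¹ * Kl) := by
    rw [hPr, transpose_mul, transpose_nonsing_inv, hSsymm.eq]
    simp only [Matrix.mul_assoc]
  rw [hPr']
  exact hD.isOrthProj_mul.one_sub.transpose_mul_mul hW

theorem blockwise_matrix_is_orthogonal_projection
    {El V : Type*} [Fintype El] [DecidableEq El] [Fintype V] [DecidableEq V]
    (Kl : Matrix El V ℝ) (hrank : Kl.rank = Fintype.card El)
    (Tl : Matrix El El ℝ) (hTl : Tl = Kl * Klᵀ)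
    (Aset : Set El) [DecidablePred (· ∈ Aset)]
    (PAl : Matrix El El ℝ) (hPAl : PAl = Matrix.diagonal (fun e => if e ∈ Aset then (1 : ℝ) else 0))
    -- `S⁻¹` plays the role of `T_l^{-1/2}`:
    (S : Matrix El El ℝ) (hS : S.PosDef) (hSsq : S * S = Tl)
    (D : Matrix El El ℝ) (hD : IsMoorePenrose (S⁻¹ * PAl) D)
    (Pr : Matrix V V ℝ)
    (hPr : Pr = Klᵀ * S⁻¹ * ((1 : Matrix El El ℝ) - (S⁻¹ * PAl) * D) * S⁻¹ * Kl) :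
    Prᵀ = Pr ∧ Pr * Pr = Pr :=
  blockwise_matrix_is_orthogonal_projection_general Kl Tl hTl PAl S hS hSsq D hD Pr hPr
end

section
/- In the setting above, the orthogonal projection Π_{I,l} = K_lᵀ T_l^{-1/2}(I_l - (T_l^{-1/2}P_{A,l})(T_l^{-1/2}P_{A,l})†)T_l^{-1/2}K_l has range equal to span{K_lᵀ e : e ∈ I ∩ E_l}, i.e., the span of the rows of K_l indexed by the inactive edges. In particular Π_{I,l} K_lᵀ P_{I,l} = K_lᵀ P_{I,l} and rank Π_{I,l} = |I ∩ E_l|. -/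
/-! Let `Q = 1 - (S⁻¹P_A)(S⁻¹P_A)⁺`, the orthogonal projection onto the orthogonal complement
of the range of `S⁻¹P_A`. As `Q` is symmetric and kills `S⁻¹P_A`, we get `P_A S⁻¹ Q = 0`, so
`S⁻¹ Q = P_I S⁻¹ Q` and `Π = Kᵀ P_I W` for some `W`. Conversely `S P_I` is orthogonal to the
range of `S⁻¹P_A`, hence fixed by `Q`; together with `K Kᵀ = S²` this gives `Π Kᵀ P_I = Kᵀ P_I`.
So `Π` and `Kᵀ P_I` have the same range, the span of the inactive rows of `K`, and its dimension
is `|I ∩ E_l|` because the rows of `K` are independent. -/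

open Matrix

namespace IsMoorePenrose

variable {m n k : Type*} [Fintype m] [Fintype n] [DecidableEq m]
  {A : Matrix m n ℝ} {X : Matrix n m ℝ}

theorem transpose_mul_one_sub_mul (h : IsMoorePenrose A X) : Aᵀ * (1 - A * X) = 0 := by
  rw [Matrix.mul_sub, Matrix.mul_one, ← h.2.2.1, ← transpose_mul, h.1, sub_self]

theorem one_sub_mul_mul_of_transpose_mul_eq_zero (h : IsMoorePenrose A X) {Y : Matrix m k ℝ}
    (hY : Aᵀ * Y = 0) : (1 - A * X) * Y = Y := by
  rw [Matrix.sub_mul, Matrix.one_mul, ← h.2.2.1, transpose_mul, Matrix.mul_assoc, hY,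
    Matrix.mul_zero, sub_zero]

end IsMoorePenrose

namespace Matrix

section

variable {m : Type*} [Fintype m] [DecidableEq m] {S P X : Matrix m m ℝ}

theorem transpose_inv_mul_of_isSymm (hS : S.IsSymm) (hP : P.IsSymm) :
    (S⁻¹ * P)ᵀ = P * S⁻¹ := by
  rw [transpose_mul, hP.eq, transpose_nonsing_inv, hS.eq]

theorem inv_mul_one_sub_eq_one_sub_mul (hS : S.IsSymm) (hP : P.IsSymm)
    (h : IsMoorePenrose (S⁻¹ * P) X) :
    S⁻¹ * (1 - S⁻¹ * P * X) = (1 - P) * (S⁻¹ * (1 - S⁻¹ * P * X)) := by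
  have hPQ := h.transpose_mul_one_sub_mul
  rw [transpose_inv_mul_of_isSymm hS hP, Matrix.mul_assoc] at hPQ
  rw [sub_mul, one_mul, hPQ, sub_zero]

theorem inv_mul_one_sub_mul_mul_one_sub (hS : S.IsSymm) (hdet : IsUnit S.det) (hP : P.IsSymm)
    (hPP : P * P = P) (h : IsMoorePenrose (S⁻¹ * P) X) :
    S⁻¹ * (1 - S⁻¹ * P * X) * (S * (1 - P)) = 1 - P := by
  have hann : (S⁻¹ * P)ᵀ * (S * (1 - P)) = 0 := by
    rw [transpose_inv_mul_of_isSymm hS hP, Matrix.mul_assoc, ← Matrix.mul_assoc S⁻¹,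
      nonsing_inv_mul S hdet, Matrix.one_mul, Matrix.mul_sub, Matrix.mul_one, hPP, sub_self]
  rw [Matrix.mul_assoc, h.one_sub_mul_mul_of_transpose_mul_eq_zero hann, ← Matrix.mul_assoc,
    nonsing_inv_mul S hdet, Matrix.one_mul]

end

variable {m n R : Type*}

theorem range_mulVecLin_eq_of_mul_eq [Fintype m] [Fintype n] [CommSemiring R]
    {P : Matrix n n R} {B : Matrix n m R} (W : Matrix m n R) (hP : P = B * W) (hPB : P * B = B) :
    LinearMap.range P.mulVecLin = LinearMap.range B.mulVecLin := by
  apply le_antisymm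
  · rw [hP, mulVecLin_mul]
    exact LinearMap.range_comp_le_range _ _
  · conv_lhs => rw [← hPB, mulVecLin_mul]
    exact LinearMap.range_comp_le_range _ _

theorem range_mulVecLin_transpose_mul_diagonal_ite [Fintype m] [CommSemiring R] [DecidableEq m]
    (K : Matrix m n R) (s : Set m) [DecidablePred (· ∈ s)] :
    LinearMap.range (Kᵀ * diagonal fun i => if i ∈ s then (1 : R) else 0).mulVecLin
      = Submodule.span R (K.row '' s) := by
  have hcol : (Kᵀ * diagonal fun i => if i ∈ s then (1 : R) else 0).col
      = fun i => if i ∈ s then K i else 0 := by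
    ext i j
    by_cases hi : i ∈ s <;> simp [col, hi]
  rw [range_mulVecLin, hcol]
  apply le_antisymm
  · rw [Submodule.span_le]
    rintro _ ⟨i, rfl⟩
    by_cases hi : i ∈ s
    · simp only [hi, ↓reduceIte]
      exact Submodule.subset_span (Set.mem_image_of_mem K.row hi)
    · simp [hi]
  · rw [Submodule.span_le]
    rintro _ ⟨i, hi, rfl⟩
    exact Submodule.subset_span ⟨i, if_pos hi⟩

theorem diagonal_ite_mul_self [Fintype m] [Semiring R] [DecidableEq m] (s : Set m)
    [DecidablePred (· ∈ s)] :
    ((diagonal fun i => if i ∈ s then (1 : R) else 0) *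
        diagonal fun i => if i ∈ s then (1 : R) else 0)
      = diagonal fun i => if i ∈ s then 1 else 0 := by
  rw [diagonal_mul_diagonal]
  congr 1
  funext i
  by_cases hi : i ∈ s <;> simp [hi]

theorem one_sub_diagonal_ite [Ring R] [DecidableEq m] (s : Set m) [DecidablePred (· ∈ s)]
    [DecidablePred (· ∈ sᶜ)] :
    1 - (diagonal fun i => if i ∈ s then (1 : R) else 0)
      = diagonal fun i => if i ∈ sᶜ then 1 else 0 := by
  rw [← diagonal_one, diagonal_sub]
  congr 1
  funext i
  by_cases hi : i ∈ s <;> simp [hi]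

theorem linearIndependent_row_of_rank_eq_card [Fintype m] [Fintype n] [Field R]
    {K : Matrix m n R} (h : K.rank = Fintype.card m) : LinearIndependent R K.row :=
  linearIndependent_iff_card_eq_finrank_span.mpr <| by
    rw [Set.finrank, ← rank_eq_finrank_span_row, h]

theorem finrank_span_row_image_of_rank_eq_card [Fintype m] [Fintype n] [Field R]
    {K : Matrix m n R} (h : K.rank = Fintype.card m) (s : Set m) [Fintype s] :
    Module.finrank R (Submodule.span R (K.row '' s)) = Fintype.card s := by
  rw [Set.image_eq_range]
  exact finrank_span_eq_card <|
    (linearIndependent_row_of_rank_eq_card h).comp _ Subtype.val_injective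

end Matrix

theorem blockwise_projection_range_general
    {El V : Type*} [Fintype El] [DecidableEq El] [Fintype V]
    (Kl : Matrix El V ℝ) (hrank : Kl.rank = Fintype.card El)
    (Tl : Matrix El El ℝ) (hTl : Tl = Kl * Klᵀ)
    (Aset Iset : Set El) [DecidablePred (· ∈ Aset)] [DecidablePred (· ∈ Iset)]
    (hAI : Iset = Asetᶜ)
    (PAl : Matrix El El ℝ) (hPAl : PAl = Matrix.diagonal (fun e => if e ∈ Aset then (1 : ℝ) else 0))
    (PIl : Matrix El El ℝ) (hPIl : PIl = (1 : Matrix El El ℝ) - PAl)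
    -- `S⁻¹` plays the role of `T_l^{-1/2}`:
    (S : Matrix El El ℝ) (hS : S.PosDef) (hSsq : S * S = Tl)
    (D : Matrix El El ℝ) (hD : IsMoorePenrose (S⁻¹ * PAl) D)
    (Pr : Matrix V V ℝ)
    (hPr : Pr = Klᵀ * S⁻¹ * ((1 : Matrix El El ℝ) - (S⁻¹ * PAl) * D) * S⁻¹ * Kl) :
    LinearMap.range Pr.mulVecLin = Submodule.span ℝ ((fun e => Kl e) '' Iset) ∧
    Pr * (Klᵀ * PIl) = Klᵀ * PIl ∧
    Pr.rank = Fintype.card {e : El // e ∈ Iset} := by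
  have hSsymm : S.IsSymm := isHermitian_iff_isSymm.mp hS.isHermitian
  have hSdet : IsUnit S.det := hS.det_pos.ne'.isUnit
  have hPsymm : PAl.IsSymm := by rw [hPAl]; exact isSymm_diagonal _
  have hPidem : PAl * PAl = PAl := by rw [hPAl, diagonal_ite_mul_self]
  have hKK : Kl * Klᵀ = S * S := by rw [hSsq, hTl]
  have hfac : Pr = Klᵀ * PIl * (S⁻¹ * (1 - S⁻¹ * PAl * D) * S⁻¹ * Kl) := by
    calc Pr = Klᵀ * ((1 - PAl) * (S⁻¹ * (1 - S⁻¹ * PAl * D))) * S⁻¹ * Kl := by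
          rw [hPr, ← inv_mul_one_sub_eq_one_sub_mul hSsymm hPsymm hD, Matrix.mul_assoc Klᵀ]
      _ = Klᵀ * PIl * (S⁻¹ * (1 - S⁻¹ * PAl * D) * S⁻¹ * Kl) := by
          simp only [hPIl, Matrix.mul_assoc]
  have hfix : Pr * (Klᵀ * PIl) = Klᵀ * PIl := by
    calc Pr * (Klᵀ * PIl)
        = Klᵀ * (S⁻¹ * (1 - S⁻¹ * PAl * D) * S⁻¹ * (Kl * Klᵀ) * PIl) := by
          simp only [hPr, Matrix.mul_assoc]
      _ = Klᵀ * (S⁻¹ * (1 - S⁻¹ * PAl * D) * (S * (1 - PAl))) := by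
          simp only [hKK, hPIl, Matrix.mul_assoc, nonsing_inv_mul_cancel_left _ _ hSdet]
      _ = Klᵀ * PIl := by
          rw [inv_mul_one_sub_mul_mul_one_sub hSsymm hSdet hPsymm hPidem hD, hPIl]
  have hrange : LinearMap.range Pr.mulVecLin = Submodule.span ℝ ((fun e => Kl e) '' Iset) := by
    rw [range_mulVecLin_eq_of_mul_eq _ hfac hfix, hPIl, hPAl, hAI, one_sub_diagonal_ite,
      range_mulVecLin_transpose_mul_diagonal_ite, row_def]
  refine ⟨hrange, hfix, ?_⟩
  rw [rank, hrange]
  exact finrank_span_row_image_of_rank_eq_card hrank Iset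

theorem blockwise_projection_range
    {El V : Type*} [Fintype El] [DecidableEq El] [Fintype V] [DecidableEq V]
    (Kl : Matrix El V ℝ) (hrank : Kl.rank = Fintype.card El)
    (Tl : Matrix El El ℝ) (hTl : Tl = Kl * Klᵀ)
    (Aset Iset : Set El) [DecidablePred (· ∈ Aset)] [DecidablePred (· ∈ Iset)]
    (hAI : Iset = Asetᶜ)
    (PAl : Matrix El El ℝ) (hPAl : PAl = Matrix.diagonal (fun e => if e ∈ Aset then (1 : ℝ) else 0))
    (PIl : Matrix El El ℝ) (hPIl : PIl = (1 : Matrix El El ℝ) - PAl)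
    -- `S⁻¹` plays the role of `T_l^{-1/2}`:
    (S : Matrix El El ℝ) (hS : S.PosDef) (hSsq : S * S = Tl)
    (D : Matrix El El ℝ) (hD : IsMoorePenrose (S⁻¹ * PAl) D)
    (Pr : Matrix V V ℝ)
    (hPr : Pr = Klᵀ * S⁻¹ * ((1 : Matrix El El ℝ) - (S⁻¹ * PAl) * D) * S⁻¹ * Kl) :
    LinearMap.range Pr.mulVecLin = Submodule.span ℝ ((fun e => Kl e) '' Iset) ∧
    Pr * (Klᵀ * PIl) = Klᵀ * PIl ∧
    Pr.rank = Fintype.card {e : El // e ∈ Iset} :=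
  blockwise_projection_range_general Kl hrank Tl hTl Aset Iset hAI PAl hPAl PIl hPIl S hS hSsq D hD
    Pr hPr
end

section
/- Let Π₁,…,Π_L be orthogonal projections on a finite-dimensional real inner product space onto subspaces S₁,…,S_L with S₁ = ⋯ = S_{l̂} ⊋ S_{l̂+1} ⊇ ⋯ ⊇ S_L ⊋ {0}. Then the sum Π = Σ_{l=1}^L Π_l satisfies λ_max(Π) = L and the smallest nonzero eigenvalue of Π equals l̂. -/
/-!
For an eigenvector `v` of `Π = ∑ Πₗ` with eigenvalue `μ`, `μ ‖v‖² = ⟪Π v, v⟫ = ∑ ‖Πₗ v‖²`, and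
each term lies between `0` and `‖v‖²`, with equality on the right when `v ∈ Sₗ`. Hence `μ ≤ L`;
and if `μ ≠ 0`, then `v ∈ range Π ⊆ S₁ = ⋯ = S_l̂`, so `μ ≥ l̂`. Both bounds are attained: a
nonzero vector of `S_L` is fixed by every `Πₗ`, and a nonzero vector of `S₁ ∩ S_{l̂+1}ᗮ` is fixed
by `Π₁, …, Π_l̂` and killed by the others.
-/

open RealInnerProductSpace Finset Module.End

/-- `P` is the orthogonal projection onto the subspace `S`. -/
def IsOrthoProjOnto {F : Type*} [NormedAddCommGroup F] [InnerProductSpace ℝ F]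
    (P : F →ₗ[ℝ] F) (S : Submodule ℝ F) : Prop :=
  ∀ v : F, P v ∈ S ∧ v - P v ∈ Sᗮ

namespace IsOrthoProjOnto

variable {F : Type*} [NormedAddCommGroup F] [InnerProductSpace ℝ F]
  {P : F →ₗ[ℝ] F} {S T : Submodule ℝ F}

lemma inner_apply_sub_self (hP : IsOrthoProjOnto P S) (v : F) : ⟪P v, v - P v⟫ = 0 :=
  (Submodule.mem_orthogonal S _).mp (hP v).2 _ (hP v).1

lemma inner_apply_self (hP : IsOrthoProjOnto P S) (v : F) : ⟪P v, v⟫ = ‖P v‖ ^ 2 := by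
  have h := hP.inner_apply_sub_self v
  rw [inner_sub_right, real_inner_self_eq_norm_sq, sub_eq_zero] at h
  exact h

lemma norm_apply_sq_le (hP : IsOrthoProjOnto P S) (v : F) : ‖P v‖ ^ 2 ≤ ‖v‖ ^ 2 := by
  have h := norm_add_sq_real (P v) (v - P v)
  rw [add_sub_cancel, hP.inner_apply_sub_self] at h
  linarith [sq_nonneg ‖v - P v‖]

lemma apply_of_mem (hP : IsOrthoProjOnto P S) {v : F} (hv : v ∈ S) : P v = v := by
  have h := (Submodule.mem_orthogonal' S _).mp (hP v).2 _ (sub_mem hv (hP v).1)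
  exact (sub_eq_zero.mp (inner_self_eq_zero.mp h)).symm

lemma apply_of_mem_orthogonal (hP : IsOrthoProjOnto P S) {v : F} (hv : v ∈ Sᗮ) : P v = 0 := by
  have hPv : P v ∈ Sᗮ := by simpa using sub_mem hv (hP v).2
  exact inner_self_eq_zero.mp ((Submodule.mem_orthogonal S _).mp hPv _ (hP v).1)

lemma exists_mem_orthogonal_ne_zero (hP : IsOrthoProjOnto P T) (hTS : T < S) :
    ∃ v ∈ S, v ∈ Tᗮ ∧ v ≠ 0 := by
  obtain ⟨w, hwS, hwT⟩ := SetLike.exists_of_lt hTS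
  refine ⟨w - P w, sub_mem hwS (hTS.le (hP w).1), (hP w).2, fun h => hwT ?_⟩
  rw [sub_eq_zero.mp h]
  exact (hP w).1

end IsOrthoProjOnto

section SumOfProjections

variable {F : Type*} [NormedAddCommGroup F] [InnerProductSpace ℝ F]
  {ι : Type*} [Fintype ι] {S : ι → Submodule ℝ F} {P : ι → F →ₗ[ℝ] F}

lemma sum_apply_eq_card_smul (hP : ∀ i, IsOrthoProjOnto (P i) (S i)) (s : Finset ι) {v : F}
    (hs : ∀ i ∈ s, v ∈ S i) (hsc : ∀ i ∉ s, v ∈ (S i)ᗮ) :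
    (∑ i, P i) v = (#s : ℝ) • v := by
  classical
  have hPv : ∀ i, P i v = if i ∈ s then v else 0 := fun i => by
    split_ifs with hi
    · exact (hP i).apply_of_mem (hs i hi)
    · exact (hP i).apply_of_mem_orthogonal (hsc i hi)
  simp only [LinearMap.sum_apply, hPv, sum_ite_mem, univ_inter, sum_const,
    Nat.cast_smul_eq_nsmul]

lemma hasEigenvalue_card (hP : ∀ i, IsOrthoProjOnto (P i) (S i)) (s : Finset ι) {v : F}
    (hv : v ≠ 0) (hs : ∀ i ∈ s, v ∈ S i) (hsc : ∀ i ∉ s, v ∈ (S i)ᗮ) :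
    HasEigenvalue (∑ i, P i) (#s : ℝ) :=
  hasEigenvalue_of_hasEigenvector
    ⟨mem_eigenspace_iff.mpr (sum_apply_eq_card_smul hP s hs hsc), hv⟩

lemma Module.End.HasEigenvector.eigenvalue_mul_norm_sq
    (hP : ∀ i, IsOrthoProjOnto (P i) (S i)) {μ : ℝ} {v : F}
    (hv : HasEigenvector (∑ i, P i) μ v) : μ * ‖v‖ ^ 2 = ∑ i, ‖P i v‖ ^ 2 := by
  calc μ * ‖v‖ ^ 2 = ⟪(∑ i, P i) v, v⟫ := by
        rw [hv.apply_eq_smul, real_inner_smul_left, real_inner_self_eq_norm_sq]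
    _ = ∑ i, ‖P i v‖ ^ 2 := by
        simp only [LinearMap.sum_apply, sum_inner, (hP _).inner_apply_self]

lemma eigenvalue_le_card (hP : ∀ i, IsOrthoProjOnto (P i) (S i)) {μ : ℝ}
    (hμ : HasEigenvalue (∑ i, P i) μ) : μ ≤ Fintype.card ι := by
  obtain ⟨v, hv⟩ := hμ.exists_hasEigenvector
  have hnorm : 0 < ‖v‖ ^ 2 := by have := hv.2; positivity
  have hle : ∑ i, ‖P i v‖ ^ 2 ≤ Fintype.card ι * ‖v‖ ^ 2 := by
    simpa using sum_le_sum fun i (_ : i ∈ univ) => (hP i).norm_apply_sq_le v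
  rw [← hv.eigenvalue_mul_norm_sq hP] at hle
  exact le_of_mul_le_mul_right hle hnorm

lemma card_le_eigenvalue (hP : ∀ i, IsOrthoProjOnto (P i) (S i)) (s : Finset ι) {μ : ℝ} {v : F}
    (hv : HasEigenvector (∑ i, P i) μ v) (hs : ∀ i ∈ s, v ∈ S i) : (#s : ℝ) ≤ μ := by
  have hnorm : 0 < ‖v‖ ^ 2 := by have := hv.2; positivity
  have hle : #s * ‖v‖ ^ 2 ≤ ∑ i, ‖P i v‖ ^ 2 :=
    calc #s * ‖v‖ ^ 2 = ∑ i ∈ s, ‖v‖ ^ 2 := by simp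
      _ = ∑ i ∈ s, ‖P i v‖ ^ 2 := sum_congr rfl fun i hi => by rw [(hP i).apply_of_mem (hs i hi)]
      _ ≤ ∑ i, ‖P i v‖ ^ 2 :=
          sum_le_sum_of_subset_of_nonneg (subset_univ s) fun _ _ _ => by positivity
  rw [← hv.eigenvalue_mul_norm_sq hP] at hle
  exact le_of_mul_le_mul_right hle hnorm

lemma Module.End.HasEigenvector.mem_of_ne_zero {T : Submodule ℝ F}
    (hP : ∀ i, IsOrthoProjOnto (P i) (S i)) (hST : ∀ i, S i ≤ T) {μ : ℝ} (hμ : μ ≠ 0) {v : F}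
    (hv : HasEigenvector (∑ i, P i) μ v) :
    v ∈ T := by
  have hμv : μ • v ∈ T := by
    rw [← hv.apply_eq_smul, LinearMap.sum_apply]
    exact T.sum_mem fun i _ => hST i (hP i v).1
  simpa [hμ] using T.smul_mem μ⁻¹ hμv

end SumOfProjections

theorem sum_of_nested_projections_eigenvalues
    {F : Type*} [NormedAddCommGroup F] [InnerProductSpace ℝ F] [FiniteDimensional ℝ F]
    (L : ℕ) (hL : 0 < L) (lhat : ℕ) (h2 : lhat ≤ L)
    (S : Fin L → Submodule ℝ F)
    (P : Fin L → (F →ₗ[ℝ] F)) (hP : ∀ l, IsOrthoProjOnto (P l) (S l))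
    (hmono : ∀ i j : Fin L, i ≤ j → S j ≤ S i)
    (heq : ∀ i : Fin L, (i : ℕ) < lhat → S i = S ⟨0, hL⟩)
    (hstrict : ∀ i : Fin L, (i : ℕ) = lhat → S i < S ⟨0, hL⟩)
    (hbot : S ⟨L - 1, by omega⟩ ≠ ⊥) :
    (Module.End.HasEigenvalue (∑ l, P l) ((L : ℝ)) ∧
      ∀ μ : ℝ, Module.End.HasEigenvalue (∑ l, P l) μ → μ ≤ (L : ℝ)) ∧
    (Module.End.HasEigenvalue (∑ l, P l) ((lhat : ℝ)) ∧
      ∀ μ : ℝ, Module.End.HasEigenvalue (∑ l, P l) μ → μ ≠ 0 → (lhat : ℝ) ≤ μ) := by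
  set head : Finset (Fin L) := {i | (i : ℕ) < lhat}
  have hcard : #head = lhat := by simp [head, Fin.card_filter_val_lt, h2]
  have hS_head : ∀ i ∈ head, S i = S ⟨0, hL⟩ := fun i hi => heq i (by simpa [head] using hi)
  have hS0 : ∀ i, S i ≤ S ⟨0, hL⟩ := fun i => hmono _ i (Fin.le_def.mpr (Nat.zero_le _))
  obtain ⟨v₀, hv₀, hv₀ne⟩ := Submodule.exists_mem_ne_zero_of_ne_bot hbot
  have hv₀S : ∀ i, v₀ ∈ S i := fun i => hmono i _ (Fin.le_def.mpr (Nat.le_sub_one_of_lt i.2)) hv₀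
  have hL_eig : HasEigenvalue (∑ l, P l) (L : ℝ) := by
    simpa using hasEigenvalue_card hP univ hv₀ne (fun i _ => hv₀S i) (by simp)
  have h_split : ∃ v ≠ 0, (∀ i ∈ head, v ∈ S i) ∧ ∀ i ∉ head, v ∈ (S i)ᗮ := by
    rcases h2.eq_or_lt with rfl | hlt
    · exact ⟨v₀, hv₀ne, fun i _ => hv₀S i, fun i hi => absurd (by simp [head]) hi⟩
    obtain ⟨v, hvS, hvT, hvne⟩ :=
      (hP ⟨lhat, hlt⟩).exists_mem_orthogonal_ne_zero (hstrict ⟨lhat, hlt⟩ rfl)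
    refine ⟨v, hvne, fun i hi => hS_head i hi ▸ hvS, fun i hi => ?_⟩
    exact Submodule.orthogonal_le (hmono _ i (Fin.le_def.mpr (by simpa [head] using hi))) hvT
  obtain ⟨v, hvne, hvS, hvT⟩ := h_split
  refine ⟨⟨hL_eig, fun μ hμ => by simpa using eigenvalue_le_card hP hμ⟩,
    hcard ▸ hasEigenvalue_card hP head hvne hvS hvT, fun μ hμ hμ0 => ?_⟩
  obtain ⟨w, hw⟩ := hμ.exists_hasEigenvector
  have hwS0 : w ∈ S ⟨0, hL⟩ := hw.mem_of_ne_zero hP hS0 hμ0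
  exact hcard ▸ card_le_eigenvalue hP head hw fun i hi => hS_head i hi ▸ hwS0
end
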